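/- Let G be a connected plane graph with minimum degree at least 3 that contains no cycle of length 4, no cycle of length 7, no cycle of length 9, and no 5-cycle normally adjacent to a 3-cycle. Then no 3-face of G is adjacent to an 8-face of G. -/

import Mathlib

/-!
Let the 3-face be `xyz` and let the 8-face share its edge `xy`, which it must traverse in the
opposite direction, so that its boundary is a closed walk `w₀ = y, w₁ = x, w₂, …, w₇`.
Because every vertex has degree at least 3, the rotation system forbids this walk to backtrack
and to turn `y → x → z` or `z → y → x`: either would make the rotation swap two darts at a
vertex. Without 4-cycles the only possible repetition on the walk is `wₐ = wₐ₊₃`, which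
either makes the walk run around `xyz` backwards or cuts out a 5-cycle through `xy`, normally
adjacent to `xyz`. So the walk is an 8-cycle; `z` cannot lie on it, and then
`z, x, w₂, …, w₇, y` is a 9-cycle.
-/

namespace Paper

open SimpleGraph

variable {V : Type*}

/-- The fixed-point-free involution on darts reversing each dart. -/
def dartFlip (G : SimpleGraph V) : Equiv.Perm G.Dart :=
  ⟨SimpleGraph.Dart.symm, SimpleGraph.Dart.symm,
    fun d => SimpleGraph.Dart.symm_symm d, fun d => SimpleGraph.Dart.symm_symm d⟩

/-- A combinatorial embedding (rotation system) of a simple graph: a permutation of the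
darts whose cycles are exactly the sets of darts emanating from a common vertex. -/
structure PlaneEmbedding (G : SimpleGraph V) where
  rot : Equiv.Perm G.Dart
  fst_rot : ∀ d : G.Dart, (rot d).fst = d.fst
  rot_cyclic : ∀ d e : G.Dart, d.fst = e.fst → rot.SameCycle d e

/-- The face permutation of a combinatorial embedding; its orbits are the (boundary walks
of the) faces of the embedding. -/
def PlaneEmbedding.facePerm {G : SimpleGraph V} (E : PlaneEmbedding G) : Equiv.Perm G.Dart :=
  E.rot * dartFlip G

/-- The face (as its set of boundary darts, i.e. the orbit of the face permutation)
containing a given dart. -/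
def faceOf {G : SimpleGraph V} (E : PlaneEmbedding G) (d : G.Dart) : Set G.Dart :=
  {e | E.facePerm.SameCycle d e}

/-- The length of the boundary walk of the face containing a given dart; a `k`-face is a
face whose boundary walk has length `k`, i.e. whose dart-orbit has size `k`. -/
noncomputable def faceSize {G : SimpleGraph V} (E : PlaneEmbedding G) (d : G.Dart) : ℕ :=
  (faceOf E d).ncard

/-- The number of faces of the embedding lying in a given connected component. -/
noncomputable def componentFaceCount {G : SimpleGraph V} (E : PlaneEmbedding G)
    (c : G.ConnectedComponent) : ℕ :=
  Nat.card (Quotient (Setoid.comap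
    (Subtype.val : {d : G.Dart // G.connectedComponentMk d.fst = c} → G.Dart)
    (Equiv.Perm.SameCycle.setoid E.facePerm)))

/-- The embedding is plane (genus zero): Euler's formula `V - E + F = 2` holds on each
connected component containing an edge (stated as `2V + 2F = #darts + 4`, using that the
number of darts is twice the number of edges). -/
def PlaneEmbedding.IsPlane {G : SimpleGraph V} (E : PlaneEmbedding G) : Prop :=
  ∀ c : G.ConnectedComponent, (∃ d : G.Dart, G.connectedComponentMk d.fst = c) →
    2 * {v : V | G.connectedComponentMk v = c}.ncard + 2 * componentFaceCount E c
      = {d : G.Dart | G.connectedComponentMk d.fst = c}.ncard + 4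

/-- `G` is a planar graph: it admits a plane (genus-zero) combinatorial embedding. -/
def IsPlanar (G : SimpleGraph V) : Prop :=
  ∃ E : PlaneEmbedding G, E.IsPlane

/-- `G` has no cycle of length `n`. -/
def NoCycleLen (G : SimpleGraph V) (n : ℕ) : Prop :=
  ∀ (v : V) (c : G.Walk v v), c.IsCycle → c.length ≠ n

/-- Two cycles (given as closed walks) are normally adjacent: their intersection is
isomorphic to `K₂`, i.e. they share exactly one edge together with its two endpoints. -/
def NormAdjWalks (G : SimpleGraph V) {a b : V} (c₁ : G.Walk a a) (c₂ : G.Walk b b) : Prop :=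
  ∃ x y : V, x ≠ y ∧ s(x, y) ∈ c₁.edges ∧ s(x, y) ∈ c₂.edges ∧
    (∀ z : V, (z ∈ c₁.support ∧ z ∈ c₂.support) ↔ (z = x ∨ z = y))

/-- `G` has no `5`-cycle normally adjacent to a `3`-cycle. -/
def No5CycleNormAdj3 (G : SimpleGraph V) : Prop :=
  ∀ (a b : V) (c₁ : G.Walk a a) (c₂ : G.Walk b b),
    c₁.IsCycle → c₁.length = 5 → c₂.IsCycle → c₂.length = 3 →
      ¬ NormAdjWalks G c₁ c₂

/-- `d` lists the boundary darts of a face in order, and this boundary is the closed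
walk `v 0, v 1, …, v (n-1), v 0`. -/
def FaceTraversal {G : SimpleGraph V} (E : PlaneEmbedding G) {n : ℕ}
    (v : ZMod n → V) (d : ZMod n → G.Dart) : Prop :=
  (∀ i, (d i).toProd = (v i, v (i + 1))) ∧ ∀ i, E.facePerm (d i) = d (i + 1)

/-- The cycle `v 0, v 1, …, v (n-1), v 0` (with distinct vertices) bounds a face of the
embedding (traversed in one of the two possible directions). -/
def CycleBoundsFace {G : SimpleGraph V} (E : PlaneEmbedding G) {n : ℕ}
    (v : ZMod n → V) : Prop :=
  Function.Injective v ∧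
    ((∃ d, FaceTraversal E v d) ∨ (∃ d, FaceTraversal E (fun i => v (-i)) d))

/-- The `i`-th vertex of the boundary walk of the face containing the dart `d0`. -/
def boundaryVert {G : SimpleGraph V} (E : PlaneEmbedding G) (d0 : G.Dart) (i : ℕ) : V :=
  ((E.facePerm ^ i) d0).fst

/-- The faces containing the darts `d1`, `d2` are adjacent: their boundaries share at
least one edge. -/
def FacesAdjacent {G : SimpleGraph V} (E : PlaneEmbedding G) (d1 d2 : G.Dart) : Prop :=
  ∃ e1 e2 : G.Dart, E.facePerm.SameCycle d1 e1 ∧ E.facePerm.SameCycle d2 e2 ∧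
    e1.edge = e2.edge

/-- The set of vertices on the boundary of the face containing the dart `d`. -/
def faceVerts {G : SimpleGraph V} (E : PlaneEmbedding G) (d : G.Dart) : Set V :=
  {x | ∃ e : G.Dart, E.facePerm.SameCycle d e ∧ e.fst = x}

/-- The set of edges on the boundary of the face containing the dart `d`. -/
def faceEdges {G : SimpleGraph V} (E : PlaneEmbedding G) (d : G.Dart) : Set (Sym2 V) :=
  {s | ∃ e : G.Dart, E.facePerm.SameCycle d e ∧ e.edge = s}

section Configs

variable [Fintype V]

/-- Configuration (1): a `10`-cycle bounding a face together with a `3`-cycle bounding a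
face, normally adjacent to it along one edge, all eleven vertices having degree `3`. -/
def Config1 (G : SimpleGraph V) [DecidableRel G.Adj] (E : PlaneEmbedding G) : Prop :=
  ∃ (v : ZMod 10 → V) (w : ZMod 3 → V) (u : V),
    CycleBoundsFace E v ∧ CycleBoundsFace E w ∧
    ({w 0, w 1, w 2} : Set V) = {v 0, v 1, u} ∧ u ∉ Set.range v ∧
    (∀ i, G.degree (v i) = 3) ∧ G.degree u = 3

/-- Configuration (2): two vertex-disjoint `10`-cycles `x₁…x₁₀` and `y₁…y₁₀` (indexed here
from `0`), each bounding a face, with edges `x₃y₃` and `x₁₀y₁₀`; all `xᵢ` have degree `3`,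
`y₃` and `y₁₀` have degree `4`, the other `yᵢ` have degree `3`. -/
def Config2 (G : SimpleGraph V) [DecidableRel G.Adj] (E : PlaneEmbedding G) : Prop :=
  ∃ x y : ZMod 10 → V,
    CycleBoundsFace E x ∧ CycleBoundsFace E y ∧
    Set.range x ∩ Set.range y = ∅ ∧
    G.Adj (x 2) (y 2) ∧ G.Adj (x 9) (y 9) ∧
    (∀ i, G.degree (x i) = 3) ∧
    G.degree (y 2) = 4 ∧ G.degree (y 9) = 4 ∧
    (∀ i, i ≠ 2 → i ≠ 9 → G.degree (y i) = 3)

/-- Configuration (3): an `8`-cycle bounding a face and a `5`-cycle bounding a face that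
are normally adjacent (sharing exactly one edge and its endpoints), all eleven vertices
having degree `3`. -/
def Config3 (G : SimpleGraph V) [DecidableRel G.Adj] (E : PlaneEmbedding G) : Prop :=
  ∃ (a : ZMod 8 → V) (b : ZMod 5 → V),
    CycleBoundsFace E a ∧ CycleBoundsFace E b ∧
    Set.range a ∩ Set.range b = {a 0, a 1} ∧
    (∃ j : ZMod 5, (b j = a 0 ∧ b (j + 1) = a 1) ∨ (b j = a 1 ∧ b (j + 1) = a 0)) ∧
    (∀ i, G.degree (a i) = 3) ∧ (∀ j, G.degree (b j) = 3)

end Configs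

open Classical in
/-- The function resulting from the operation `Delete_[u](G, f)`: every neighbour of `u`
loses one unit. -/
noncomputable def deleteFun (G : SimpleGraph V) (u : V) (f : V → ℤ) : V → ℤ :=
  fun v => if G.Adj u v then f v - 1 else f v

open Classical in
/-- The function resulting from the operation `DeleteSave_[u; w](G, f)`: every neighbour
of `u` except `w` loses one unit. -/
noncomputable def deleteSaveFun (G : SimpleGraph V) (u w : V) (f : V → ℤ) : V → ℤ :=
  fun v => if G.Adj u v ∧ v ≠ w then f v - 1 else f v

/-- All vertices of the subgraph of `G` induced on `S` can be removed by a sequence of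
legal applications of the `Delete` and `DeleteSave` operations, starting from the value
function `f`. -/
inductive WeaklyReducible (G : SimpleGraph V) : Set V → (V → ℤ) → Prop
  | empty (f : V → ℤ) : WeaklyReducible G ∅ f
  | delete (S : Set V) (f : V → ℤ) (u : V) (hu : u ∈ S)
      (hnn : ∀ v ∈ S \ {u}, 0 ≤ deleteFun G u f v)
      (h : WeaklyReducible G (S \ {u}) (deleteFun G u f)) : WeaklyReducible G S f
  | deleteSave (S : Set V) (f : V → ℤ) (u w : V) (hu : u ∈ S) (hw : w ∈ S \ {u})
      (hadj : G.Adj u w) (hlt : f w < f u)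
      (hnn : ∀ v ∈ S \ {u}, 0 ≤ deleteSaveFun G u w f v)
      (h : WeaklyReducible G (S \ {u}) (deleteSaveFun G u w f)) : WeaklyReducible G S f

/-- `G` is weakly `d`-degenerate: all its vertices can be removed by a sequence of legal
applications of the `Delete` and `DeleteSave` operations, starting from the constant
function of value `d`. -/
def WeaklyDegenerate (G : SimpleGraph V) (d : ℤ) : Prop :=
  WeaklyReducible G Set.univ (fun _ => d)

/-- The canonical cover of `G` with `s = 2`: two disjoint copies of `G`, on vertex set
`V × Fin 2`, with `(u, i)` adjacent to `(v, j)` iff `uv ∈ E(G)` and `i = j`. -/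
def canonicalCover2 (G : SimpleGraph V) : SimpleGraph (V × Fin 2) where
  Adj a b := G.Adj a.1 b.1 ∧ a.2 = b.2
  symm := ⟨fun _ _ h => ⟨h.1.symm, h.2.symm⟩⟩
  loopless := ⟨fun a h => G.ne_of_adj h.1 rfl⟩

/-- `T` is a strictly `f`-degenerate transversal-candidate set: every nonempty subgraph
`K` of the induced subgraph `H[T]` has a vertex `x` with `deg_K x < f x`. -/
def StrictlyFDegenerateOn {W : Type*} (H : SimpleGraph W) (f : W → ℕ) (T : Set W) : Prop :=
  ∀ K : H.Subgraph, K.verts ⊆ T → K.verts.Nonempty →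
    ∃ x ∈ K.verts, Nat.card (K.neighborSet x) < f x

end Paper

open SimpleGraph

theorem Equiv.Perm.isCycleOn_setOf_sameCycle {α : Type*} (f : Equiv.Perm α) (x : α) :
    f.IsCycleOn {y | f.SameCycle x y} :=
  ⟨⟨fun _ hy => sameCycle_apply_right.2 hy, f.injective.injOn,
    fun y hy => ⟨f.symm y, sameCycle_symm_apply_right.2 hy, f.apply_symm_apply y⟩⟩,
    fun _ ha _ hb => ha.symm.trans hb⟩

theorem Equiv.Perm.pow_apply_eq_pow_apply_of_modEq {α : Type*} [Finite α] (f : Equiv.Perm α)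
    (x : α) {m k : ℕ} (h : m ≡ k [MOD {y | f.SameCycle x y}.ncard]) :
    (f ^ m) x = (f ^ k) x := by
  have hs := Set.toFinite {y | f.SameCycle x y}
  rw [Set.ncard_eq_toFinset_card _ hs] at h
  have hcyc := f.isCycleOn_setOf_sameCycle x
  rw [← hs.coe_toFinset] at hcyc
  exact (hcyc.pow_apply_eq_pow_apply (by simpa using SameCycle.refl f x)).2 h

namespace Paper

variable {V : Type*} {G : SimpleGraph V}

section Faces

theorem PlaneEmbedding.facePerm_apply (E : PlaneEmbedding G) (d : G.Dart) :
    E.facePerm d = E.rot d.symm := rfl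

theorem faceOf_eq_of_sameCycle (E : PlaneEmbedding G) {d e : G.Dart}
    (h : E.facePerm.SameCycle d e) : faceOf E d = faceOf E e :=
  Set.ext fun _ => ⟨h.symm.trans, h.trans⟩

theorem faceSize_eq_of_sameCycle (E : PlaneEmbedding G) {d e : G.Dart}
    (h : E.facePerm.SameCycle d e) : faceSize E d = faceSize E e := by
  rw [faceSize, faceSize, faceOf_eq_of_sameCycle E h]

theorem FaceTraversal.adj {E : PlaneEmbedding G} {n : ℕ} {v : ZMod n → V}
    {d : ZMod n → G.Dart} (h : FaceTraversal E v d) (i : ZMod n) : G.Adj (v i) (v (i + 1)) := by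
  simpa [h.1 i] using (d i).adj

variable [Fintype V] [DecidableRel G.Adj]

theorem exists_faceTraversal (E : PlaneEmbedding G) {n : ℕ} [NeZero n] {e : G.Dart}
    (h : faceSize E e = n) :
    ∃ (v : ZMod n → V) (d : ZMod n → G.Dart),
      FaceTraversal E v d ∧ d 0 = e ∧ ∀ i, E.facePerm.SameCycle e (d i) := by
  have hF : ∀ i : ZMod n,
      E.facePerm ((E.facePerm ^ i.val) e) = (E.facePerm ^ (i + 1).val) e := by
    intro i
    rw [← Equiv.Perm.mul_apply, ← pow_succ']
    refine E.facePerm.pow_apply_eq_pow_apply_of_modEq e ?_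
    change _ ≡ _ [MOD faceSize E e]
    rw [h, ← ZMod.natCast_eq_natCast_iff]
    simp
  refine ⟨fun i => ((E.facePerm ^ i.val) e).fst, fun i => (E.facePerm ^ i.val) e,
    ⟨fun i => Prod.ext rfl ?_, hF⟩, by simp,
    fun i => Equiv.Perm.sameCycle_pow_right.2 (Equiv.Perm.SameCycle.refl _ _)⟩
  change ((E.facePerm ^ i.val) e).snd = ((E.facePerm ^ (i + 1).val) e).fst
  rw [← hF, PlaneEmbedding.facePerm_apply, E.fst_rot]
  rfl

theorem PlaneEmbedding.degree_le_two_of_rot_rot (E : PlaneEmbedding G) {d : G.Dart}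
    (h : E.rot (E.rot d) = d) : G.degree d.fst ≤ 2 := by
  classical
  have hsub : G.neighborFinset d.fst ⊆ {d.snd, (E.rot d).snd} := by
    intro u hu
    obtain ⟨k, -, hk⟩ :=
      (E.rot_cyclic d ⟨(d.fst, u), (G.mem_neighborFinset _ _).1 hu⟩ rfl).exists_pow_eq'
    have hper : Function.IsPeriodicPt E.rot 2 d := h
    rw [← Equiv.Perm.iterate_eq_pow, ← hper.iterate_mod_apply] at hk
    have hu' := congrArg (fun d : G.Dart => d.snd) hk
    rcases Nat.mod_two_eq_zero_or_one k with hk2 | hk2 <;>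
      simp only [hk2, Function.iterate_zero, Function.iterate_one, id] at hu' <;> simp [hu']
  exact (Finset.card_le_card hsub).trans Finset.card_le_two

/-- The rotation at `u (j + 1)` swaps its darts towards `u j` and `u (j + 2)`. Taking `u = w`
rules out backtracking face walks. -/
theorem FaceTraversal.degree_le_two_of_reverse_corner {E : PlaneEmbedding G} {m n : ℕ}
    {u : ZMod m → V} {t : ZMod m → G.Dart} {w : ZMod n → V} {d : ZMod n → G.Dart}
    (hu : FaceTraversal E u t) (hw : FaceTraversal E w d) {i : ZMod n} {j : ZMod m}
    (h0 : w i = u (j + 2)) (h1 : w (i + 1) = u (j + 1)) (h2 : w (i + 2) = u j) :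
    G.degree (u (j + 1)) ≤ 2 := by
  have hdi : d i = (t (j + 1)).symm := by
    ext <;> simp [hw.1, hu.1, h0, h1, add_assoc, one_add_one_eq_two]
  have hdi1 : d (i + 1) = (t j).symm := by
    ext <;> simp [hw.1, hu.1, h1, h2, add_assoc, one_add_one_eq_two]
  have hrot : E.rot (t (j + 1)) = (t j).symm := by
    simpa [hdi, hdi1, PlaneEmbedding.facePerm_apply] using hw.2 i
  have hrot2 : E.rot (E.rot (t (j + 1))) = t (j + 1) := by
    rw [hrot, ← PlaneEmbedding.facePerm_apply, hu.2]
  have hfst : (t (j + 1)).fst = u (j + 1) := congrArg Prod.fst (hu.1 (j + 1))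
  exact hfst ▸ E.degree_le_two_of_rot_rot hrot2

end Faces

theorem eq_of_adj_of_adj_of_noCycleLen_four (h4 : NoCycleLen G 4) {a b c d : V} (hac : a ≠ c)
    (hab : G.Adj a b) (hbc : G.Adj b c) (had : G.Adj a d) (hdc : G.Adj d c) : b = d := by
  by_contra hbd
  refine h4 a (.cons hab (.cons hbc (.cons hdc.symm (.cons had.symm .nil)))) ?_ rfl
  simp [Walk.cons_isCycle_iff, hab.ne, hbc.ne, hdc.ne', had.ne, hac, hac.symm, hbd, hab.ne',
    had.ne']

theorem false_of_pentagon_through_triangle_edge (h4 : NoCycleLen G 4) (h53 : No5CycleNormAdj3 G)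
    {x y z : V} (hxy : G.Adj x y) (hyz : G.Adj y z) (hzx : G.Adj z x) {p q r : V}
    (hxp : G.Adj x p) (hpq : G.Adj p q) (hqr : G.Adj q r) (hry : G.Adj r y)
    (hyp : y ≠ p) (hyq : y ≠ q) (hxq : x ≠ q) (hxr : x ≠ r) (hpr : p ≠ r) : False := by
  have hzp : z ≠ p := by
    rintro rfl
    exact hpr (eq_of_adj_of_adj_of_noCycleLen_four h4 hyq.symm hqr hry hpq.symm hyz.symm).symm
  have hzq : z ≠ q := by
    rintro rfl
    exact hyp (eq_of_adj_of_adj_of_noCycleLen_four h4 hzx.ne' hxp hpq hxy hyz).symm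
  have hzr : z ≠ r := by
    rintro rfl
    exact hpr (eq_of_adj_of_adj_of_noCycleLen_four h4 hxq hxp hpq hzx.symm hqr.symm)
  refine h53 y x (.cons hxy.symm (.cons hxp (.cons hpq (.cons hqr (.cons hry .nil)))))
    (.cons hxy (.cons hyz (.cons hzx .nil))) ?_ rfl ?_ rfl
    ⟨x, y, hxy.ne, by simp, by simp, fun u => ?_⟩
  · simp [Walk.cons_isCycle_iff, hxy.ne, hxp.ne, hpq.ne, hqr.ne, hry.ne, hyp, hyq, hxq, hxr, hpr,
      hxy.ne', hry.ne', hyp.symm, hyq.symm]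
  · simp [Walk.cons_isCycle_iff, hxy.ne, hyz.ne, hzx.ne, hxy.ne', hzx.ne']
  · simp only [Walk.support_cons, Walk.support_nil, List.mem_cons, List.not_mem_nil, or_false]
    aesop

section ClosedWalkEight

variable {w : ZMod 8 → V}

theorem ne_add_three_of_closedWalk_eight (h4 : NoCycleLen G 4) (h53 : No5CycleNormAdj3 G)
    (hw : ∀ i, G.Adj (w i) (w (i + 1))) (hnb : ∀ i, w (i + 2) ≠ w i)
    (hrev : ∀ i, ¬(w i = w 1 ∧ w (i + 1) = w 0)) {z : V} (hz0 : G.Adj z (w 0))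
    (hz1 : G.Adj z (w 1)) (hz2 : w 2 ≠ z) (hz7 : w 7 ≠ z) (a : ZMod 8) : w (a + 3) ≠ w a := by
  have cn := @eq_of_adj_of_adj_of_noCycleLen_four _ _ h4
  have pent := @false_of_pentagon_through_triangle_edge _ _ h4 h53 _ _ _
    (hw 0).symm hz0.symm hz1
  -- At `a = 0, 7, 6` the triangle cut out by `w a = w (a + 3)` contains the edge `w 0 w 1`,
  -- so its third vertex is `z`; at the other `a` the rest of the walk is a pentagon.
  have h30 : w 3 ≠ w 0 := fun h => hz2 (cn (hw 0).ne' (hw 1) (h ▸ hw 2) hz1.symm hz0)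
  have h27 : w 2 ≠ w 7 := fun h => hz7 (cn (hw 0).ne (hw 7).symm (h ▸ (hw 1).symm) hz0.symm hz1)
  have h16 : w 1 ≠ w 6 := fun h => hz7 (cn (hw 0).ne (hw 7).symm (h ▸ (hw 6).symm) hz0.symm hz1)
  have h41 : w 4 ≠ w 1 := fun h => pent (h ▸ hw 4) (hw 5) (hw 6) (hw 7)
    (fun h' => hrev 4 ⟨h, h'.symm⟩) (hnb 6) (h ▸ (hnb 4).symm) (hnb 7) (hnb 5).symm
  have h52 : w 5 ≠ w 2 := fun h => pent (hw 1) (h ▸ hw 5) (hw 6) (hw 7)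
    (hnb 0).symm (hnb 6) h16 (hnb 7) (h ▸ (hnb 5).symm)
  have h63 : w 6 ≠ w 3 := fun h => pent (hw 1) (hw 2) (h ▸ hw 6) (hw 7)
    (hnb 0).symm h30.symm (hnb 1).symm (hnb 7) h27
  have h74 : w 7 ≠ w 4 := fun h => pent (hw 1) (hw 2) (hw 3) (h ▸ hw 7)
    (hnb 0).symm h30.symm (hnb 1).symm (h ▸ hnb 7) (hnb 2).symm
  have h05 : w 0 ≠ w 5 := fun h => pent (hw 1) (hw 2) (hw 3) (h ▸ hw 4)
    (hnb 0).symm h30.symm (hnb 1).symm (fun h' => hrev 4 ⟨h'.symm, h.symm⟩) (hnb 2).symm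
  fin_cases a
  exacts [h30, h41, h52, h63, h74, h05, h16, h27]

theorem injective_of_closedWalk_eight (h4 : NoCycleLen G 4) (hw : ∀ i, G.Adj (w i) (w (i + 1)))
    (hnb : ∀ i, w (i + 2) ≠ w i) (h3 : ∀ a, w (a + 3) ≠ w a) : Function.Injective w := by
  have adj : ∀ i j, i + 1 = j → G.Adj (w i) (w j) := by
    rintro i _ rfl
    exact hw i
  have hw4 : ∀ i, w (i + 4) ≠ w i := by
    intro i h
    have hi3 : G.Adj (w (i + 3)) (w i) := h ▸ adj _ _ (by ring)
    refine hnb (i + 1) ?_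
    rw [show i + 1 + 2 = i + 3 by ring]
    exact (eq_of_adj_of_adj_of_noCycleLen_four h4 (hnb i).symm (hw i) (adj _ _ (by ring))
      hi3.symm (adj _ _ (by ring)).symm).symm
  intro i j hij
  by_contra hne
  obtain ⟨k, rfl⟩ : ∃ k, j = i + k := ⟨j - i, by ring⟩
  fin_cases k
  · exact hne (add_zero i).symm
  · exact (hw i).ne hij
  · exact hnb i hij.symm
  · exact h3 i hij.symm
  · exact hw4 i hij.symm
  · exact h3 (i + 5) (by rw [show i + 5 + 3 = i by grind]; exact hij)
  · exact hnb (i + 6) (by rw [show i + 6 + 2 = i by grind]; exact hij)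
  · exact (hw (i + 7)).ne (by rw [show i + 7 + 1 = i by grind]; exact hij.symm)

theorem false_of_cycle_eight_through_triangle_edge (h4 : NoCycleLen G 4) (h9 : NoCycleLen G 9)
    (hw : ∀ i, G.Adj (w i) (w (i + 1))) (hinj : Function.Injective w) {z : V}
    (hz0 : G.Adj z (w 0)) (hz1 : G.Adj z (w 1)) (hz2 : w 2 ≠ z) (hz7 : w 7 ≠ z) : False := by
  have cn := @eq_of_adj_of_adj_of_noCycleLen_four _ _ h4
  by_cases hz : z ∈ Set.range w
  · obtain ⟨j, rfl⟩ := hz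
    have hj : ∀ j : ZMod 8,
        j = 0 ∨ j = 1 ∨ j = 2 ∨ j = 3 ∨ j = 4 ∨ j = 5 ∨ j = 6 ∨ j = 7 := by
      decide
    obtain rfl | rfl | rfl | rfl | rfl | rfl | rfl | rfl := hj j
    · exact hz0.ne rfl
    · exact hz1.ne rfl
    · exact hz2 rfl
    -- every other position of `z` closes a 4-cycle
    · exact absurd (hinj (cn (hinj.ne (by decide)) (hw 1) (hw 2) (hw 0).symm hz0.symm)) (by decide)
    · exact absurd (hinj (cn (hinj.ne (by decide)) (hw 1) (hw 2) hz1.symm (hw 3).symm)) (by decide)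
    · exact absurd (hinj (cn (hinj.ne (by decide)) (hw 7).symm (hw 6).symm hz0.symm (hw 5)))
        (by decide)
    · exact absurd (hinj (cn (hinj.ne (by decide)) (hw 7).symm (hw 6).symm (hw 0) hz1.symm))
        (by decide)
    · exact hz7 rfl
  · have hz' : ∀ i, w i ≠ z := fun i h => hz ⟨i, h⟩
    refine h9 z (.cons hz1 (.cons (hw 1) (.cons (hw 2) (.cons (hw 3) (.cons (hw 4) (.cons (hw 5)
      (.cons (hw 6) (.cons (hw 7) (.cons hz0.symm .nil))))))))) ?_ rfl
    simp [Walk.cons_isCycle_iff, hinj.eq_iff, hz', (hz' _).symm]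
    decide

theorem false_of_closedWalk_eight_through_triangle_edge (h4 : NoCycleLen G 4)
    (h9 : NoCycleLen G 9) (h53 : No5CycleNormAdj3 G) (hw : ∀ i, G.Adj (w i) (w (i + 1)))
    (hnb : ∀ i, w (i + 2) ≠ w i) (hrev : ∀ i, ¬(w i = w 1 ∧ w (i + 1) = w 0)) {z : V}
    (hz0 : G.Adj z (w 0)) (hz1 : G.Adj z (w 1)) (hz2 : w 2 ≠ z) (hz7 : w 7 ≠ z) : False :=
  false_of_cycle_eight_through_triangle_edge h4 h9 hw
    (injective_of_closedWalk_eight h4 hw hnb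
      (ne_add_three_of_closedWalk_eight h4 h53 hw hnb hrev hz0 hz1 hz2 hz7)) hz0 hz1 hz2 hz7

end ClosedWalkEight

end Paper

theorem statement18_general {V : Type*} [Fintype V] (G : SimpleGraph V) [DecidableRel G.Adj]
    (E : Paper.PlaneEmbedding G)
    (hmin : ∀ v : V, 3 ≤ G.degree v)
    (h4 : Paper.NoCycleLen G 4)
    (h9 : Paper.NoCycleLen G 9) (h53 : Paper.No5CycleNormAdj3 G) :
    ∀ d1 d2 : G.Dart, Paper.faceSize E d1 = 3 → Paper.faceSize E d2 = 8 →
      ¬ Paper.FacesAdjacent E d1 d2 := by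
  rintro d1 d2 h3 h8 ⟨e1, e2, h1, h2, hedge⟩
  rw [Paper.faceSize_eq_of_sameCycle E h1] at h3
  rw [Paper.faceSize_eq_of_sameCycle E h2] at h8
  obtain ⟨u, t, ht, rfl, -⟩ := Paper.exists_faceTraversal E h3
  obtain ⟨w, d, hw, rfl, hd⟩ := Paper.exists_faceTraversal E h8
  have hdt : ∀ i, d i ≠ t 0 := fun i h => by
    have := Paper.faceSize_eq_of_sameCycle E (h ▸ hd i)
    omega
  have hd0 : d 0 = (t 0).symm := ((dart_edge_eq_iff _ _).1 hedge.symm).resolve_left (hdt 0)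
  have h01 := hw.1 0
  rw [hd0, Dart.symm_toProd, ht.1 0] at h01
  obtain ⟨hw0, hw1⟩ : w 0 = u 1 ∧ w 1 = u 0 :=
    ⟨(congrArg Prod.fst h01).symm, (congrArg Prod.snd h01).symm⟩
  have hdeg : ∀ {v}, G.degree v ≤ 2 → False := fun {v} h => by
    have := hmin v
    omega
  refine Paper.false_of_closedWalk_eight_through_triangle_edge h4 h9 h53 hw.adj (z := u 2)
    (fun i h => hdeg (Paper.FaceTraversal.degree_le_two_of_reverse_corner hw hw h.symm rfl h))
    (fun i ⟨ha, hb⟩ => hdt i (Dart.ext _ _ (by rw [hw.1, ht.1, ha, hb, hw0, hw1]; rfl)))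
    (hw0 ▸ (ht.adj 1).symm) (hw1 ▸ ht.adj 2)
    (fun h => hdeg (Paper.FaceTraversal.degree_le_two_of_reverse_corner ht hw
      (i := 0) (j := 2) hw0 hw1 h))
    (fun h => hdeg (Paper.FaceTraversal.degree_le_two_of_reverse_corner ht hw
      (i := 7) (j := 0) h hw0 hw1))

/-- No 3-face is adjacent to a 8-face. -/
theorem statement18 {V : Type*} [Fintype V] (G : SimpleGraph V) [DecidableRel G.Adj]
    (hconn : G.Connected)
    (E : Paper.PlaneEmbedding G) (hE : E.IsPlane)
    (hmin : ∀ v : V, 3 ≤ G.degree v)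
    (h4 : Paper.NoCycleLen G 4) (h7 : Paper.NoCycleLen G 7)
    (h9 : Paper.NoCycleLen G 9) (h53 : Paper.No5CycleNormAdj3 G) :
    ∀ d1 d2 : G.Dart, Paper.faceSize E d1 = 3 → Paper.faceSize E d2 = 8 →
      ¬ Paper.FacesAdjacent E d1 d2 :=
  statement18_general G E hmin h4 h9 h53
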